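/- Let β > 1 and let λ ∈ ℂ satisfy 1/β < |λ| < 1 and Σ_{n=1}^∞ a_n(β,1)/(βλ)^n = 1 (i.e. λ is a non-leading eigenvalue of the Perron–Frobenius operator of τ_β). Then the function F_λ : [0,1] → ℂ, F_λ(x) = Σ_{n=1}^∞ a_n(β,x)/(βλ)^n, is Lipschitz at no point of [0,1]: for every x₀ ∈ [0,1], there do not exist C > 0 and δ > 0 with |F_λ(x) − F_λ(x₀)| ≤ C|x − x₀| for all x ∈ [0,1] with |x − x₀| < δ. Consequently F_λ is differentiable (within [0,1]) at no point of [0,1]. -/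

import Mathlib

open scoped BigOperators

/-- The beta-map `x ↦ βx - ⌊βx⌋`. -/
noncomputable def tau (β x : ℝ) : ℝ := β * x - ⌊β * x⌋

/-- Greedy digit `a_n(β,x) = ⌊β·τ_β^{n-1}(x)⌋` (meaningful for `n ≥ 1`). -/
noncomputable def dig (β x : ℝ) (n : ℕ) : ℤ := ⌊β * (tau β)^[n - 1] x⌋

/-- `x` is a simple point for `β`: some `τ_β^{n-1}(x)` lies in `{1/β, …, ⌊β⌋/β}`. -/
def IsSimplePt (β x : ℝ) : Prop :=
  ∃ n : ℕ, 1 ≤ n ∧ ∃ k : ℕ, 1 ≤ k ∧ (k : ℤ) ≤ ⌊β⌋ ∧ (tau β)^[n - 1] x = (k : ℝ) / β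

/-- `L(x)`: the least `n ≥ 1` with `τ_β^{n-1}(x) ∈ {1/β, …, ⌊β⌋/β}`. -/
noncomputable def Lpt (β x : ℝ) : ℕ :=
  sInf {n : ℕ | 1 ≤ n ∧ ∃ k : ℕ, 1 ≤ k ∧ (k : ℤ) ≤ ⌊β⌋ ∧ (tau β)^[n - 1] x = (k : ℝ) / β}

/-- `β` is simple if `x = 1` is a simple point for `β`. -/
def IsSimpleBeta (β : ℝ) : Prop := IsSimplePt β 1

open Classical in
/-- Quasi-greedy digit `d_n(β,1)` (meaningful for `n ≥ 1`): if `β` is simple with `L = L(1)`,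
the periodic sequence repeating the block `(a_1, …, a_{L-1}, a_L - 1)`; otherwise `a_n(β,1)`. -/
noncomputable def qdig (β : ℝ) (n : ℕ) : ℤ :=
  if IsSimpleBeta β then
    (if (n - 1) % Lpt β 1 = Lpt β 1 - 1 then dig β 1 (Lpt β 1) - 1
     else dig β 1 ((n - 1) % Lpt β 1 + 1))
  else dig β 1 n

/-- `φ_β(z) = Σ_{n≥1} a_n(β,1) β^{-n} z^n`. -/
noncomputable def phi (β : ℝ) (z : ℂ) : ℂ :=
  ∑' n : ℕ, (dig β 1 (n + 1) : ℂ) * (z / (β : ℂ)) ^ (n + 1)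

/-- `φ̂_β(z) = Σ_{n≥1} d_n(β,1) β^{-n} z^n`. -/
noncomputable def phiHat (β : ℝ) (z : ℂ) : ℂ :=
  ∑' n : ℕ, (qdig β (n + 1) : ℂ) * (z / (β : ℂ)) ^ (n + 1)

/-- `ψ_β(z) = 1 + Σ_{n≥1} τ_β^n(1) β^{-n} z^n`. -/
noncomputable def psi (β : ℝ) (z : ℂ) : ℂ :=
  1 + ∑' n : ℕ, (((tau β)^[n + 1] 1 : ℝ) : ℂ) * (z / (β : ℂ)) ^ (n + 1)

/-- `F_λ(x) = Σ_{n≥1} a_n(β,x)/(βλ)^n`. -/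
noncomputable def Ffun (β : ℝ) (lam : ℂ) (x : ℝ) : ℂ :=
  ∑' n : ℕ, (dig β x (n + 1) : ℂ) / ((β : ℂ) * lam) ^ (n + 1)

/-!
Write `b = βλ`, so that `1 < ‖b‖ < β`. Shifting the digit sequence gives
`F(x) = Σ_{k≤n} a_k(x)/b^k + b⁻ⁿ F(τⁿx)`, so two points whose first `n` digits agree satisfy
`F(x) - F(x') = b⁻ⁿ (F(τⁿx) - F(τⁿx'))`. Moving `x₀` by `e` without crossing a discontinuity of
`τ, …, τⁿ` moves `τⁿx₀` by `βⁿe`; hence at every `x₀` we find points at distance `O(β⁻ᵐ)` where `F`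
changes by `≳ ‖b‖⁻ᵐ`, and `(β/‖b‖)ᵐ → ∞` rules out a Lipschitz bound, let alone a derivative.
Since `F(β⁻ʲ) = b⁻ʲ` for `j ≥ 1`, such points exist
* left of `x₀` if its orbit avoids `0`: of the two points whose `n`-th iterates are `β^{-j-1}` and
  `β^{-j-2}`, with `β^{-j-1} < τⁿx₀ ≤ β^{-j}`, at least one has `F`-value far from `F(x₀)`;
* right of `x₀ < 1` if `τⁿx₀ = 0`: the `n`-th iterate of `x₀ + β^{-n-m}` is `β⁻ᵐ`;
* left of `x₀ = 1` if `τ^{p+1}(1) = 0`: then `τᵖ(1) = a/β`, and the eigenvalue equation `F(1) = 1`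
  turns `F(1 - u β^{-p-1}) - 1 = b^{-p-1} (F(1 - u) - 1)` into
  `F(1 - β^{-(p+1)k}) = 1 - b^{-(p+1)k}`.
-/

open Filter Topology Asymptotics Set

def FrequentlySteep {E : Type*} [Norm E] [Sub E] (f : ℝ → E) (s : Set ℝ) (x₀ β r κ : ℝ) : Prop :=
  ∃ᶠ m in atTop, ∃ x ∈ s, |x - x₀| ≤ (β ^ m)⁻¹ ∧ κ * (r ^ m)⁻¹ ≤ ‖f x - f x₀‖

lemma FrequentlySteep.not_isBigO {E : Type*} [SeminormedAddCommGroup E] {f : ℝ → E}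
    {s : Set ℝ} {x₀ β r κ : ℝ} (h : FrequentlySteep f s x₀ β r κ) (hβ : 1 < β) (hr : 0 < r)
    (hrβ : r < β) (hκ : 0 < κ) :
    ¬ (fun x => f x - f x₀) =O[𝓝[s] x₀] fun x => x - x₀ := by
  intro hO
  obtain ⟨c, hc, hcO⟩ := hO.exists_pos
  obtain ⟨δ, hδ, hbound⟩ := Metric.eventually_nhds_iff.1 (eventually_nhdsWithin_iff.1 hcO.bound)
  have hclose : ∀ᶠ m : ℕ in atTop, (β ^ m)⁻¹ < δ :=
    (tendsto_inv_atTop_zero.comp (tendsto_pow_atTop_atTop_of_one_lt hβ)).eventually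
      (gt_mem_nhds hδ)
  have hsteep : ∀ᶠ m : ℕ in atTop, c * (β ^ m)⁻¹ < κ * (r ^ m)⁻¹ := by
    filter_upwards [(tendsto_pow_atTop_atTop_of_one_lt ((one_lt_div hr).2 hrβ)).eventually_gt_atTop
      (c / κ)] with m hm
    rw [div_pow, div_lt_div_iff₀ hκ (pow_pos hr m)] at hm
    rw [← div_eq_mul_inv, ← div_eq_mul_inv, div_lt_div_iff₀ (pow_pos (hr.trans hrβ) m)
      (pow_pos hr m)]
    linarith
  obtain ⟨m, ⟨x, hxs, hxd, hxf⟩, hm, hcm⟩ := (h.and_eventually (hclose.and hsteep)).exists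
  have hfx := hbound (by rw [Real.dist_eq]; linarith) hxs
  rw [Real.norm_eq_abs] at hfx
  linarith [mul_le_mul_of_nonneg_left hxd hc.le]

lemma isBigO_sub_of_forall_abs_sub_lt {E : Type*} [SeminormedAddCommGroup E] {f : ℝ → E}
    {s : Set ℝ} {x₀ C δ : ℝ} (hδ : 0 < δ)
    (h : ∀ x ∈ s, |x - x₀| < δ → ‖f x - f x₀‖ ≤ C * |x - x₀|) :
    (fun x => f x - f x₀) =O[𝓝[s] x₀] fun x => x - x₀ :=
  IsBigO.of_bound C <| eventually_nhdsWithin_iff.2 <| Metric.eventually_nhds_iff.2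
    ⟨δ, hδ, fun x hx hxs => by
      rw [Real.norm_eq_abs]
      exact h x hxs (by rwa [← Real.dist_eq])⟩

section BetaExpansion

variable {β : ℝ} {lam : ℂ}

lemma tau_nonneg (x : ℝ) : 0 ≤ tau β x := Int.fract_nonneg _

lemma tau_lt_one (x : ℝ) : tau β x < 1 := Int.fract_lt_one _

lemma iterate_succ_tau_mem_Ico (x : ℝ) (k : ℕ) : (tau β)^[k + 1] x ∈ Ico 0 1 := by
  rw [Function.iterate_succ_apply']
  exact ⟨tau_nonneg _, tau_lt_one _⟩

lemma iterate_tau_nonneg {x : ℝ} (hx : 0 ≤ x) : ∀ k, 0 ≤ (tau β)^[k] x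
  | 0 => hx
  | k + 1 => (iterate_succ_tau_mem_Ico x k).1

lemma iterate_tau_lt_one {x : ℝ} (hx : x < 1) : ∀ k, (tau β)^[k] x < 1
  | 0 => hx
  | k + 1 => (iterate_succ_tau_mem_Ico x k).2

lemma iterate_tau_le_pow_mul (hβ : 0 ≤ β) {x : ℝ} (hx : 0 ≤ x) (k : ℕ) :
    (tau β)^[k] x ≤ β ^ k * x := by
  induction k with
  | zero => simp
  | succ k ih =>
    rw [Function.iterate_succ_apply', pow_succ', mul_assoc]
    have hfloor : (0 : ℝ) ≤ ⌊β * (tau β)^[k] x⌋ := by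
      exact_mod_cast Int.floor_nonneg.2 (mul_nonneg hβ (iterate_tau_nonneg hx k))
    calc tau β ((tau β)^[k] x) ≤ β * (tau β)^[k] x := by rw [tau]; linarith
      _ ≤ β * (β ^ k * x) := mul_le_mul_of_nonneg_left ih hβ

lemma tau_add_of_mem {z e : ℝ} (h : tau β z + β * e ∈ Ico 0 1) :
    tau β (z + e) = tau β z + β * e := by
  have hfloor : ⌊β * (z + e)⌋ = ⌊β * z⌋ := by
    obtain ⟨h0, h1⟩ := h
    rw [tau] at h0 h1
    rw [Int.floor_eq_iff]
    constructor <;> linarith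
  simp only [tau, hfloor]
  ring

lemma iterate_tau_add_of_forall {x₀ e : ℝ} {n : ℕ}
    (h : ∀ k < n, (tau β)^[k + 1] x₀ + β ^ (k + 1) * e ∈ Ico 0 1) :
    ∀ k ≤ n, (tau β)^[k] (x₀ + e) = (tau β)^[k] x₀ + β ^ k * e := by
  intro k hk
  induction k with
  | zero => simp
  | succ k ih =>
    have hstep : (tau β)^[k + 1] x₀ = tau β ((tau β)^[k] x₀) := Function.iterate_succ_apply' _ _ _
    have hmem := h k hk
    rw [hstep, show β ^ (k + 1) * e = β * (β ^ k * e) by ring] at hmem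
    rw [Function.iterate_succ_apply', ih (by omega), tau_add_of_mem hmem, hstep]
    ring

lemma iterate_tau_sub_of_le (hβ : 0 < β) {x₀ e : ℝ} {n : ℕ} (he : 0 ≤ e)
    (hen : β ^ n * e ≤ (tau β)^[n] x₀) :
    ∀ k ≤ n, (tau β)^[k] (x₀ - e) = (tau β)^[k] x₀ - β ^ k * e := by
  have hmem : ∀ k < n, (tau β)^[k + 1] x₀ + β ^ (k + 1) * -e ∈ Ico 0 1 := by
    intro k hk
    obtain ⟨d, rfl⟩ := Nat.exists_eq_add_of_lt hk
    have hy := iterate_succ_tau_mem_Ico (β := β) x₀ k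
    have hle : β ^ d * (β ^ (k + 1) * e) ≤ β ^ d * (tau β)^[k + 1] x₀ :=
      calc β ^ d * (β ^ (k + 1) * e) = β ^ (k + d + 1) * e := by ring
        _ ≤ (tau β)^[d] ((tau β)^[k + 1] x₀) := by
          rw [← Function.iterate_add_apply, show d + (k + 1) = k + d + 1 by ring]
          exact hen
        _ ≤ β ^ d * (tau β)^[k + 1] x₀ := iterate_tau_le_pow_mul hβ.le hy.1 d
    have hek := le_of_mul_le_mul_left hle (pow_pos hβ d)
    have hek0 := mul_nonneg (pow_nonneg hβ.le (k + 1)) he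
    rw [mul_neg]
    exact ⟨by linarith, by linarith [hy.2]⟩
  intro k hk
  simpa [sub_eq_add_neg] using iterate_tau_add_of_forall hmem k hk

lemma exists_iterate_tau_eq_intCast_div (hβ : 0 < β) {x₀ : ℝ} (hx₀ : 0 < x₀)
    (h : ∃ n, (tau β)^[n] x₀ = 0) : ∃ p, ∃ a : ℤ, 1 ≤ a ∧ (tau β)^[p] x₀ = a / β := by
  classical
  have hn : Nat.find h ≠ 0 := by
    intro h0
    have := Nat.find_spec h
    rw [h0, Function.iterate_zero_apply] at this
    exact hx₀.ne' this
  obtain ⟨p, hp⟩ := Nat.exists_eq_succ_of_ne_zero hn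
  set y := (tau β)^[p] x₀
  have hy : 0 < y := (iterate_tau_nonneg hx₀.le p).lt_of_ne' (Nat.find_min h (by omega))
  have hfloor : (⌊β * y⌋ : ℝ) = β * y := by
    have := Nat.find_spec h
    rw [hp, Function.iterate_succ_apply', tau] at this
    linarith
  refine ⟨p, ⌊β * y⌋, ?_, by rw [hfloor]; field_simp; rfl⟩
  have : (0 : ℝ) < ⌊β * y⌋ := by rw [hfloor]; positivity
  exact_mod_cast this

lemma dig_succ (x : ℝ) (k : ℕ) : dig β x (k + 1) = ⌊β * (tau β)^[k] x⌋ := rfl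

lemma cast_dig_succ (x : ℝ) (k : ℕ) :
    (dig β x (k + 1) : ℝ) = β * (tau β)^[k] x - (tau β)^[k + 1] x := by
  rw [dig_succ, Function.iterate_succ_apply', tau]
  ring

lemma dig_iterate_tau (x : ℝ) (n k : ℕ) :
    dig β ((tau β)^[n] x) (k + 1) = dig β x (k + n + 1) := by
  rw [dig_succ, dig_succ, ← Function.iterate_add_apply]

lemma abs_dig_add_two_le (x : ℝ) (k : ℕ) : |(dig β x (k + 2) : ℝ)| ≤ |β| + 1 := by
  have hy := iterate_succ_tau_mem_Ico (β := β) x k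
  set z := β * (tau β)^[k + 1] x
  have hz : |z| ≤ |β| := by
    rw [abs_mul, abs_of_nonneg hy.1]
    exact mul_le_of_le_one_right (abs_nonneg β) hy.2.le
  rw [dig_succ, abs_le]
  constructor
  · linarith [Int.lt_floor_add_one z, neg_abs_le z]
  · linarith [Int.floor_le z, le_abs_self z]

lemma summable_Ffun (hb : 1 < ‖(β : ℂ) * lam‖) (x : ℝ) :
    Summable fun n : ℕ => (dig β x (n + 1) : ℂ) / ((β : ℂ) * lam) ^ (n + 1) := by
  -- only the digits after the first are bounded independently of `x`
  refine (summable_nat_add_iff 1).1 <| Summable.of_norm_bounded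
    ((summable_geometric_of_lt_one (by positivity) (inv_lt_one_of_one_lt₀ hb)).mul_left (|β| + 1))
    fun n => ?_
  rw [norm_div, norm_pow, Complex.norm_intCast, inv_pow, ← div_eq_mul_inv]
  exact div_le_div₀ (by positivity) (abs_dig_add_two_le x n) (by positivity)
    (pow_le_pow_right₀ hb.le (by omega))

lemma Ffun_eq_sum_add (hb : 1 < ‖(β : ℂ) * lam‖) (x : ℝ) (n : ℕ) :
    Ffun β lam x = ∑ k ∈ Finset.range n, (dig β x (k + 1) : ℂ) / ((β : ℂ) * lam) ^ (k + 1)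
      + (((β : ℂ) * lam) ^ n)⁻¹ * Ffun β lam ((tau β)^[n] x) := by
  have hb0 : (β : ℂ) * lam ≠ 0 := norm_pos_iff.1 (one_pos.trans hb)
  rw [Ffun, ← (summable_Ffun hb x).sum_add_tsum_nat_add n, Ffun, ← tsum_mul_left]
  congr 1
  refine tsum_congr fun k => ?_
  rw [dig_iterate_tau, show k + n + 1 = k + 1 + n by ring, pow_add]
  field_simp

lemma Ffun_zero : Ffun β lam 0 = 0 := by
  have hdig (n : ℕ) : dig β 0 (n + 1) = 0 := by
    rw [dig_succ, Function.iterate_fixed (show tau β 0 = 0 by simp [tau])]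
    simp
  simp [Ffun, hdig]

lemma Ffun_intCast_add_div (hβ : β ≠ 0) (hb : 1 < ‖(β : ℂ) * lam‖) (a : ℤ) {y : ℝ}
    (hy : y ∈ Ico 0 1) :
    Ffun β lam ((a + y) / β) = (a + Ffun β lam y) / ((β : ℂ) * lam) := by
  have hβy : β * ((a + y) / β) = a + y := by field_simp
  have hfloor : ⌊(a : ℝ) + y⌋ = a := by
    rw [Int.floor_intCast_add, Int.floor_eq_zero_iff.2 hy, add_zero]
  rw [Ffun_eq_sum_add hb _ 1]
  simp only [Finset.range_one, Finset.sum_singleton, zero_add, pow_one, dig_succ,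
    Function.iterate_zero_apply, Function.iterate_one, tau, hβy, hfloor]
  rw [add_sub_cancel_left]
  ring

lemma Ffun_inv_pow_succ (hβ : 1 < β) (hb : 1 < ‖(β : ℂ) * lam‖) (m : ℕ) :
    Ffun β lam (β ^ (m + 1))⁻¹ = (((β : ℂ) * lam) ^ (m + 1))⁻¹ := by
  have hβ0 : β ≠ 0 := by positivity
  induction m with
  | zero =>
    have h := Ffun_intCast_add_div (lam := lam) hβ0 hb 1 (y := 0) ⟨le_rfl, one_pos⟩
    rw [Ffun_zero] at h
    simpa using h
  | succ m ih =>
    have hmem : (β ^ (m + 1))⁻¹ ∈ Ico 0 1 :=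
      ⟨by positivity, inv_lt_one_of_one_lt₀ (one_lt_pow₀ hβ (by omega))⟩
    have h := Ffun_intCast_add_div (lam := lam) hβ0 hb 0 hmem
    rw [ih, Int.cast_zero, zero_add, Int.cast_zero, zero_add] at h
    rw [pow_succ, mul_inv, ← div_eq_mul_inv, h]
    ring

lemma Ffun_sub_eq_of_iterate_eq_add (hb : 1 < ‖(β : ℂ) * lam‖) {x x₀ e : ℝ} {n : ℕ}
    (h : ∀ k ≤ n, (tau β)^[k] x = (tau β)^[k] x₀ + β ^ k * e) :
    Ffun β lam x - Ffun β lam x₀ =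
      (((β : ℂ) * lam) ^ n)⁻¹ * (Ffun β lam ((tau β)^[n] x) - Ffun β lam ((tau β)^[n] x₀)) := by
  have hdig : ∀ k ∈ Finset.range n, dig β x (k + 1) = dig β x₀ (k + 1) := by
    intro k hk
    have hk := Finset.mem_range.1 hk
    have : (dig β x (k + 1) : ℝ) = dig β x₀ (k + 1) := by
      rw [cast_dig_succ, cast_dig_succ, h k hk.le, h (k + 1) hk]
      ring
    exact_mod_cast this
  rw [Ffun_eq_sum_add hb x n, Ffun_eq_sum_add hb x₀ n,
    Finset.sum_congr rfl fun k hk => by rw [hdig k hk]]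
  ring

lemma Ffun_sub_eq_of_pow_mul_le (hβ : 0 < β) (hb : 1 < ‖(β : ℂ) * lam‖) {x₀ e : ℝ} {n : ℕ}
    (he : 0 ≤ e) (hen : β ^ n * e ≤ (tau β)^[n] x₀) :
    Ffun β lam (x₀ - e) - Ffun β lam x₀ = (((β : ℂ) * lam) ^ n)⁻¹ *
      (Ffun β lam ((tau β)^[n] x₀ - β ^ n * e) - Ffun β lam ((tau β)^[n] x₀)) := by
  have hiter := iterate_tau_sub_of_le hβ he hen
  rw [Ffun_sub_eq_of_iterate_eq_add hb (e := -e) fun k hk => by rw [hiter k hk]; ring,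
    hiter n le_rfl]

lemma exists_Ffun_sub_eq_left (hβ : 0 < β) (hb : 1 < ‖(β : ℂ) * lam‖) {x₀ : ℝ}
    (hx₀ : x₀ ∈ Icc 0 1) (n : ℕ) {z : ℝ} (hz : z ∈ Icc 0 ((tau β)^[n] x₀)) :
    ∃ x ∈ Icc 0 1, |x - x₀| ≤ (tau β)^[n] x₀ / β ^ n ∧ Ffun β lam x - Ffun β lam x₀ =
      (((β : ℂ) * lam) ^ n)⁻¹ * (Ffun β lam z - Ffun β lam ((tau β)^[n] x₀)) := by
  set y := (tau β)^[n] x₀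
  have hβn : 0 < β ^ n := pow_pos hβ n
  have he : 0 ≤ (y - z) / β ^ n := div_nonneg (by linarith [hz.2]) hβn.le
  have hen : β ^ n * ((y - z) / β ^ n) = y - z := by field_simp
  have hey : (y - z) / β ^ n ≤ y / β ^ n :=
    div_le_div_of_nonneg_right (by linarith [hz.1]) hβn.le
  have hyx : y / β ^ n ≤ x₀ := by
    rw [div_le_iff₀ hβn, mul_comm]
    exact iterate_tau_le_pow_mul hβ.le hx₀.1 n
  refine ⟨x₀ - (y - z) / β ^ n, ⟨by linarith, by linarith [hx₀.2]⟩, ?_, ?_⟩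
  · rwa [sub_sub_cancel_left, abs_neg, abs_of_nonneg he]
  · rw [Ffun_sub_eq_of_pow_mul_le hβ hb he (by rw [hen]; linarith [hz.1]), hen, sub_sub_cancel]

lemma Ffun_sub_div_pow_succ (hβ : 0 < β) (hb : 1 < ‖(β : ℂ) * lam‖) {x₀ : ℝ} {p : ℕ} {a : ℤ}
    (ha : 1 ≤ a) (hp : (tau β)^[p] x₀ = a / β) {u : ℝ} (hu : u ∈ Ioc 0 1) :
    Ffun β lam (x₀ - u / β ^ (p + 1)) - Ffun β lam x₀ =
      (((β : ℂ) * lam) ^ (p + 1))⁻¹ * (Ffun β lam (1 - u) - 1) := by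
  have hen : β ^ p * (u / β ^ (p + 1)) = u / β := by field_simp; ring
  have hle : u / β ≤ a / β :=
    div_le_div_of_nonneg_right (hu.2.trans (by exact_mod_cast ha)) hβ.le
  have hleft : (a : ℝ) / β - u / β = (((a - 1 : ℤ) : ℝ) + (1 - u)) / β := by push_cast; ring
  have hright : (a : ℝ) / β = ((a : ℝ) + 0) / β := by rw [add_zero]
  rw [Ffun_sub_eq_of_pow_mul_le hβ hb (by have := hu.1; positivity) (by rw [hen, hp]; exact hle),
    hen, hp, hleft, hright,
    Ffun_intCast_add_div hβ.ne' hb _ ⟨by linarith [hu.2], by linarith [hu.1]⟩,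
    Ffun_intCast_add_div hβ.ne' hb _ ⟨le_rfl, one_pos⟩, Ffun_zero, pow_succ, mul_inv]
  push_cast
  ring

lemma Ffun_one_sub_inv_pow (hβ : 1 ≤ β) (hb : 1 < ‖(β : ℂ) * lam‖) (h1 : Ffun β lam 1 = 1)
    {p : ℕ} {a : ℤ} (ha : 1 ≤ a) (hp : (tau β)^[p] 1 = a / β) (k : ℕ) :
    Ffun β lam (1 - (β ^ ((p + 1) * k))⁻¹) = 1 - (((β : ℂ) * lam) ^ ((p + 1) * k))⁻¹ := by
  induction k with
  | zero => simp [Ffun_zero]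
  | succ k ih =>
    have hu : (β ^ ((p + 1) * k))⁻¹ ∈ Ioc 0 1 :=
      ⟨by positivity, inv_le_one_of_one_le₀ (one_le_pow₀ hβ)⟩
    have h := Ffun_sub_div_pow_succ (lam := lam) (by positivity) hb ha hp hu
    have hx : (β ^ ((p + 1) * k))⁻¹ / β ^ (p + 1) = (β ^ ((p + 1) * (k + 1)))⁻¹ := by
      rw [div_eq_mul_inv, ← mul_inv, ← pow_add, Nat.mul_succ]
    have hpow : (((β : ℂ) * lam) ^ ((p + 1) * (k + 1)))⁻¹ =
        (((β : ℂ) * lam) ^ (p + 1))⁻¹ * (((β : ℂ) * lam) ^ ((p + 1) * k))⁻¹ := by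
      rw [← mul_inv, ← pow_add, Nat.mul_succ, add_comm]
    rw [h1, ih, hx] at h
    rw [hpow]
    linear_combination h

lemma frequentlySteep_Ffun_of_iterate_ne_zero (hβ : 1 < β) (hb : 1 < ‖(β : ℂ) * lam‖) {x₀ : ℝ}
    (hx₀ : x₀ ∈ Icc 0 1) (horb : ∀ n, (tau β)^[n] x₀ ≠ 0) :
    FrequentlySteep (Ffun β lam) (Icc 0 1) x₀ β ‖(β : ℂ) * lam‖
      (‖(β : ℂ) * lam - 1‖ / (2 * ‖(β : ℂ) * lam‖ ^ 2)) := by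
  set b := (β : ℂ) * lam with hb_def
  set r := ‖b‖
  have hβ0 : 0 < β := one_pos.trans hβ
  have hr : 0 < r := one_pos.trans hb
  refine frequently_atTop.2 fun n => ?_
  set y := (tau β)^[n] x₀
  have hy : 0 < y := (iterate_tau_nonneg hx₀.1 n).lt_of_ne' (horb n)
  have hy1 : y ≤ 1 := by
    cases n with
    | zero => exact hx₀.2
    | succ n => exact (iterate_succ_tau_mem_Ico x₀ n).2.le
  obtain ⟨j, hjy, hyj⟩ := exists_nat_pow_near (one_le_inv₀ hy |>.2 hy1) hβ
  have hyj' : (β ^ (j + 1))⁻¹ < y := (inv_lt_comm₀ hy (by positivity)).1 hyj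
  have hz : ∀ i, (β ^ (j + 1 + i))⁻¹ ∈ Icc 0 y := fun i =>
    ⟨by positivity, le_of_lt <| lt_of_le_of_lt
      (inv_anti₀ (by positivity) (pow_le_pow_right₀ hβ.le (by omega))) hyj'⟩
  have hdist : y / β ^ n ≤ (β ^ (n + j))⁻¹ := by
    rw [pow_add, mul_inv, div_eq_mul_inv, mul_comm]
    exact mul_le_mul_of_nonneg_left ((le_inv_comm₀ (by positivity) hy).1 hjy) (by positivity)
  obtain ⟨x₁, hx₁, hd₁, hF₁⟩ := exists_Ffun_sub_eq_left (lam := lam) hβ0 hb hx₀ n (hz 0)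
  obtain ⟨x₂, hx₂, hd₂, hF₂⟩ := exists_Ffun_sub_eq_left (lam := lam) hβ0 hb hx₀ n (hz 1)
  rw [add_zero, Ffun_inv_pow_succ hβ hb] at hF₁
  rw [Ffun_inv_pow_succ hβ hb] at hF₂
  rw [← hb_def] at hF₁ hF₂
  have hgap : 2 * (‖b - 1‖ / (2 * r ^ 2) * (r ^ (n + j))⁻¹) ≤
      ‖Ffun β lam x₁ - Ffun β lam x₀‖ + ‖Ffun β lam x₂ - Ffun β lam x₀‖ := by
    have hb0 : b ≠ 0 := norm_pos_iff.1 hr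
    have hdiff : (Ffun β lam x₁ - Ffun β lam x₀) - (Ffun β lam x₂ - Ffun β lam x₀) =
        (b ^ (n + j + 2))⁻¹ * (b - 1) := by
      rw [hF₁, hF₂]
      field_simp
      ring
    calc 2 * (‖b - 1‖ / (2 * r ^ 2) * (r ^ (n + j))⁻¹)
        = ‖(b ^ (n + j + 2))⁻¹ * (b - 1)‖ := by
          rw [norm_mul, norm_inv, norm_pow]
          field_simp
          ring
      _ ≤ _ := hdiff ▸ norm_sub_le _ _
  rcases le_total ‖Ffun β lam x₁ - Ffun β lam x₀‖ ‖Ffun β lam x₂ - Ffun β lam x₀‖ with h | h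
  · exact ⟨n + j, le_self_add, x₂, hx₂, hd₂.trans hdist, by linarith⟩
  · exact ⟨n + j, le_self_add, x₁, hx₁, hd₁.trans hdist, by linarith⟩

lemma frequentlySteep_Ffun_of_iterate_eq_zero (hβ : 1 < β) (hb : 1 < ‖(β : ℂ) * lam‖)
    {x₀ : ℝ} (hx₀ : x₀ ∈ Ico 0 1) {n₀ : ℕ} (horb : (tau β)^[n₀] x₀ = 0) :
    FrequentlySteep (Ffun β lam) (Icc 0 1) x₀ β ‖(β : ℂ) * lam‖ 1 := by
  set e : ℕ → ℝ := fun m => (β ^ (m + (n₀ + 1)))⁻¹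
  have he : Tendsto e atTop (𝓝 0) := tendsto_inv_atTop_zero.comp
    ((tendsto_pow_atTop_atTop_of_one_lt hβ).comp (tendsto_add_atTop_nat _))
  have hsmall : ∀ᶠ m in atTop, ∀ k ∈ Finset.range (n₀ + 1), (tau β)^[k] x₀ + β ^ k * e m < 1 := by
    refine (eventually_all_finset _).2 fun k _ => ?_
    have hk : Tendsto (fun m => (tau β)^[k] x₀ + β ^ k * e m) atTop (𝓝 ((tau β)^[k] x₀)) := by
      simpa using tendsto_const_nhds.add (he.const_mul (β ^ k))
    exact hk.eventually_lt_const (iterate_tau_lt_one hx₀.2 k)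
  refine (tendsto_add_atTop_nat (n₀ + 1)).frequently (hsmall.mono fun m hm => ?_).frequently
  have hem : 0 < e m := by positivity
  have hiter := iterate_tau_add_of_forall (x₀ := x₀) (e := e m) (n := n₀) fun k hk =>
    ⟨by have := (iterate_succ_tau_mem_Ico (β := β) x₀ k).1; positivity,
      hm (k + 1) (Finset.mem_range.2 (by omega))⟩
  have hx : x₀ + e m < 1 := by simpa using hm 0 (by simp)
  refine ⟨x₀ + e m, ⟨by linarith [hx₀.1], hx.le⟩, ?_, ?_⟩
  · rw [add_sub_cancel_left, abs_of_pos hem]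
  · have hβe : β ^ n₀ * e m = (β ^ (m + 1))⁻¹ := by
      simp only [e]
      rw [show m + (n₀ + 1) = n₀ + (m + 1) by ring, pow_add, mul_inv, ← mul_assoc,
        mul_inv_cancel₀ (by positivity), one_mul]
    rw [Ffun_sub_eq_of_iterate_eq_add hb hiter, hiter n₀ le_rfl, horb, zero_add, hβe,
      Ffun_inv_pow_succ hβ hb, Ffun_zero, sub_zero, ← mul_inv, ← pow_add, norm_inv, norm_pow,
      one_mul, show n₀ + (m + 1) = m + (n₀ + 1) by ring]

lemma frequentlySteep_Ffun_one (hβ : 1 < β) (hb : 1 < ‖(β : ℂ) * lam‖)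
    (h1 : Ffun β lam 1 = 1) {p : ℕ} {a : ℤ} (ha : 1 ≤ a) (hp : (tau β)^[p] 1 = a / β) :
    FrequentlySteep (Ffun β lam) (Icc 0 1) 1 β ‖(β : ℂ) * lam‖ 1 := by
  refine frequently_atTop.2 fun N => ⟨(p + 1) * N, Nat.le_mul_of_pos_left N p.succ_pos,
    1 - (β ^ ((p + 1) * N))⁻¹, ⟨sub_nonneg.2 (inv_le_one_of_one_le₀ (one_le_pow₀ hβ.le)),
      sub_le_self _ (by positivity)⟩, ?_, ?_⟩
  · rw [sub_sub_cancel_left, abs_neg, abs_of_pos (by positivity)]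
  · rw [Ffun_one_sub_inv_pow hβ.le hb h1 ha hp, h1, sub_sub_cancel_left, norm_neg, norm_inv,
      norm_pow, one_mul]

theorem Ffun_not_isBigO (hb : 1 < ‖(β : ℂ) * lam‖) (hbβ : ‖(β : ℂ) * lam‖ < β)
    (h1 : Ffun β lam 1 = 1) {x₀ : ℝ} (hx₀ : x₀ ∈ Icc 0 1) :
    ¬ (fun x => Ffun β lam x - Ffun β lam x₀) =O[𝓝[Icc 0 1] x₀] fun x => x - x₀ := by
  have hβ : 1 < β := hb.trans hbβ
  have hr : 0 < ‖(β : ℂ) * lam‖ := one_pos.trans hb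
  by_cases horb : ∃ n, (tau β)^[n] x₀ = 0
  · rcases hx₀.2.lt_or_eq with hlt | rfl
    · obtain ⟨n₀, hn₀⟩ := horb
      exact (frequentlySteep_Ffun_of_iterate_eq_zero hβ hb ⟨hx₀.1, hlt⟩ hn₀).not_isBigO
        hβ hr hbβ one_pos
    · obtain ⟨p, a, ha, hp⟩ := exists_iterate_tau_eq_intCast_div (by linarith) one_pos horb
      exact (frequentlySteep_Ffun_one hβ hb h1 ha hp).not_isBigO hβ hr hbβ one_pos
  · have hb1 : 0 < ‖(β : ℂ) * lam - 1‖ :=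
      norm_pos_iff.2 (sub_ne_zero.2 fun h => by simp [h] at hb)
    exact (frequentlySteep_Ffun_of_iterate_ne_zero hβ hb hx₀ (not_exists.1 horb)).not_isBigO
      hβ hr hbβ (by positivity)

end BetaExpansion

theorem stmt17 (β : ℝ) (hβ : 1 < β) (lam : ℂ)
    (h1 : 1 / β < ‖lam‖) (h2 : ‖lam‖ < 1)
    (hev : (∑' n : ℕ, (dig β 1 (n + 1) : ℂ) / ((β : ℂ) * lam) ^ (n + 1)) = 1) :
    (∀ x₀ ∈ Set.Icc (0 : ℝ) 1, ¬ ∃ C > (0 : ℝ), ∃ δ > (0 : ℝ), ∀ x ∈ Set.Icc (0 : ℝ) 1,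
      |x - x₀| < δ → ‖Ffun β lam x - Ffun β lam x₀‖ ≤ C * |x - x₀|) ∧
    (∀ x₀ ∈ Set.Icc (0 : ℝ) 1,
      ¬ DifferentiableWithinAt ℝ (Ffun β lam) (Set.Icc (0 : ℝ) 1) x₀) := by
  have hβ0 : 0 < β := one_pos.trans hβ
  have hnorm : ‖(β : ℂ) * lam‖ = β * ‖lam‖ := by
    rw [norm_mul, Complex.norm_real, Real.norm_eq_abs, abs_of_pos hβ0]
  have hb : 1 < ‖(β : ℂ) * lam‖ := by
    rw [hnorm, ← div_lt_iff₀' hβ0]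
    exact h1
  have hbβ : ‖(β : ℂ) * lam‖ < β := by
    rw [hnorm]
    exact mul_lt_of_lt_one_right hβ0 h2
  have key := fun x₀ (hx₀ : x₀ ∈ Icc (0 : ℝ) 1) => Ffun_not_isBigO hb hbβ hev hx₀
  exact ⟨fun x₀ hx₀ ⟨_, _, _, hδ, hlip⟩ => key x₀ hx₀ (isBigO_sub_of_forall_abs_sub_lt hδ hlip),
    fun x₀ hx₀ hdiff => key x₀ hx₀ hdiff.hasFDerivWithinAt.isBigO_sub⟩
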